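/- If C ⊆ F_2^n is a linear code with minimum distance at least d, then the ℓ-configuration profile (a^C_g) is a feasible solution of the level-ℓ Krawtchouk LP with linear distance constraints, with objective value |C|^ℓ; consequently val(KrawtchoukLP_Lin(n,d,ℓ))^{1/ℓ} ≥ A^Lin_2(n,d). -/
import Mathlib


open Finset

/-- Symmetric difference configuration. -/
def sdConfig (n ℓ : ℕ) (z : Fin ℓ → (Fin n → ZMod 2)) : Finset (Fin ℓ) → ℕ :=
  fun J => hammingNorm (∑ j ∈ J, z j)

/-- `(-1)^{⟨x,y⟩}` for `x, y ∈ 𝔽₂ⁿ`. -/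
def chiPair {n : ℕ} (x y : Fin n → ZMod 2) : ℤ :=
  (-1) ^ (univ.filter (fun i : Fin n => x i = 1 ∧ y i = 1)).card

/-- `∏_{j=1}^ℓ (-1)^{⟨x_j, y_j⟩}`. -/
def tupleChi {n ℓ : ℕ} (x y : Fin ℓ → (Fin n → ZMod 2)) : ℤ :=
  ∏ j : Fin ℓ, chiPair (x j) (y j)

/-- The higher-order Krawtchouk polynomial `K_h(g)`: the sum of `∏_j (-1)^{⟨x_j,y_j⟩}` over
all tuples `y` with configuration `h`, where `x` is any tuple with configuration `g`. -/
noncomputable def kraw (n ℓ : ℕ) (h g : Finset (Fin ℓ) → ℕ) : ℤ :=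
  if hg : ∃ x : Fin ℓ → (Fin n → ZMod 2), sdConfig n ℓ x = g then
    ∑ y ∈ univ.filter (fun y : Fin ℓ → (Fin n → ZMod 2) => sdConfig n ℓ y = h),
      tupleChi hg.choose y
  else 0


/-- `A₂^Lin(n,d)`: the maximum size of a linear binary code of blocklength `n` and minimum
distance at least `d`. -/
noncomputable def ALin (n d : ℕ) : ℕ :=
  sSup {m : ℕ | ∃ C : Submodule (ZMod 2) (Fin n → ZMod 2),
    (∀ x ∈ C, ∀ y ∈ C, x ≠ y → d ≤ hammingDist x y) ∧ Nat.card C = m}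

/-- The `ℓ`-configuration profile of a linear code `C`: the number of `ℓ`-tuples of
codewords with symmetric difference configuration `g`. -/
noncomputable def profileLin (n ℓ : ℕ) (C : Set (Fin n → ZMod 2))
    (g : Finset (Fin ℓ) → ℕ) : ℕ :=
  Nat.card {z : Fin ℓ → (Fin n → ZMod 2) // (∀ j, z j ∈ C) ∧ sdConfig n ℓ z = g}

/-- Feasibility for `KrawtchoukLP_Lin(n,d,ℓ)`: normalization, linear distance constraints
(forbidding any `g` with `g(J) ∈ {1,…,d−1}` for some `J ⊆ [ℓ]`), the higher-order
MacWilliams inequalities, and nonnegativity. -/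
def KrawtchoukLPLinFeasible (n d ℓ : ℕ) (a : (Finset (Fin ℓ) → ℕ) → ℝ) : Prop :=
  a (fun _ => 0) = 1 ∧
  (∀ g ∈ Finset.image (sdConfig n ℓ) univ,
    (∃ J : Finset (Fin ℓ), 1 ≤ g J ∧ g J ≤ d - 1) → a g = 0) ∧
  (∀ h ∈ Finset.image (sdConfig n ℓ) univ,
    0 ≤ ∑ g ∈ Finset.image (sdConfig n ℓ) univ, (kraw n ℓ h g : ℝ) * a g) ∧
  (∀ g, 0 ≤ a g)

/-- The value of `KrawtchoukLP_Lin(n,d,ℓ)`: the supremum of `∑_g a_g` over feasible `a`. -/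
noncomputable def krawtchoukLPLinVal (n d ℓ : ℕ) : ℝ :=
  sSup {v : ℝ | ∃ a : (Finset (Fin ℓ) → ℕ) → ℝ, KrawtchoukLPLinFeasible n d ℓ a ∧
    v = ∑ g ∈ Finset.image (sdConfig n ℓ) univ, a g}



def eps : ZMod 2 → ℤ := fun v => if v = 0 then 1 else -1

lemma eps_add (a b : ZMod 2) : eps (a + b) = eps a * eps b := by revert a b; decide

lemma eps_sum {α : Type*} (s : Finset α) (f : α → ZMod 2) :
    eps (∑ j ∈ s, f j) = ∏ j ∈ s, eps (f j) := by
  induction s using Finset.cons_induction with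
  | empty => simp [eps]
  | cons a s ha ih => rw [Finset.sum_cons, Finset.prod_cons, eps_add, ih]

lemma eps_natCast (k : ℕ) : eps (k : ZMod 2) = (-1) ^ k := by
  induction k with
  | zero => simp [eps]
  | succ m ih => push_cast; rw [eps_add, ih, pow_succ]; simp [eps]

lemma chiPair_eq {n : ℕ} (x y : Fin n → ZMod 2) :
    chiPair x y = eps (∑ i, x i * y i) := by
  have h : ∀ a b : ZMod 2, a * b = if a = 1 ∧ b = 1 then 1 else 0 := by decide
  have : (∑ i, x i * y i)
      = ((univ.filter (fun i : Fin n => x i = 1 ∧ y i = 1)).card : ZMod 2) := by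
    simp_rw [h]
    rw [Finset.sum_ite, Finset.sum_const_zero, add_zero, Finset.sum_const, nsmul_eq_mul, mul_one]
  rw [chiPair, this, eps_natCast]
lemma chiPair_comm {n : ℕ} (x y : Fin n → ZMod 2) : chiPair x y = chiPair y x := by
  rw [chiPair_eq, chiPair_eq]
  congr 1
  exact Finset.sum_congr rfl fun i _ => mul_comm _ _

lemma chiPair_add_left {n : ℕ} (x x' y : Fin n → ZMod 2) :
    chiPair (x + x') y = chiPair x y * chiPair x' y := by
  simp_rw [chiPair_eq, Pi.add_apply, add_mul, Finset.sum_add_distrib, eps_add]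

lemma chiPair_zero_right {n : ℕ} (x : Fin n → ZMod 2) : chiPair x 0 = 1 := by
  rw [chiPair_eq]; simp [eps]

lemma chiPair_zero_left {n : ℕ} (y : Fin n → ZMod 2) : chiPair 0 y = 1 := by
  rw [chiPair_comm, chiPair_zero_right]

lemma chiPair_neg_one_or_one {n : ℕ} (x y : Fin n → ZMod 2) :
    chiPair x y = 1 ∨ chiPair x y = -1 := by
  rw [chiPair_eq]; unfold eps; split <;> simp

/-- The finset of codewords. -/
noncomputable def codeFinset {n : ℕ} (C : Submodule (ZMod 2) (Fin n → ZMod 2)) :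
    Finset (Fin n → ZMod 2) :=
  (Set.toFinite (C : Set (Fin n → ZMod 2))).toFinset

lemma mem_codeFinset {n : ℕ} {C : Submodule (ZMod 2) (Fin n → ZMod 2)}
    {c : Fin n → ZMod 2} : c ∈ codeFinset C ↔ c ∈ C := by
  simp [codeFinset]

lemma card_codeFinset {n : ℕ} (C : Submodule (ZMod 2) (Fin n → ZMod 2)) :
    (codeFinset C).card = Nat.card C := by
  rw [codeFinset, ← Set.ncard_eq_toFinset_card (C : Set (Fin n → ZMod 2)),
    ← Nat.card_coe_set_eq]
  rfl

lemma add_add_self {n : ℕ} (c c₀ : Fin n → ZMod 2) : c + c₀ + c₀ = c := by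
  funext i
  show c i + c₀ i + c₀ i = c i
  rw [add_assoc, CharTwo.add_self_eq_zero, add_zero]

lemma sum_chiPair_of_forall {n : ℕ} {C : Submodule (ZMod 2) (Fin n → ZMod 2)}
    {w : Fin n → ZMod 2} (h : ∀ c ∈ C, chiPair c w = 1) :
    ∑ c ∈ codeFinset C, chiPair c w = (Nat.card C : ℤ) := by
  rw [Finset.sum_congr rfl (fun c hc => h c (mem_codeFinset.1 hc)), Finset.sum_const,
    nsmul_eq_mul, mul_one, card_codeFinset]

lemma sum_chiPair_of_not_forall {n : ℕ} {C : Submodule (ZMod 2) (Fin n → ZMod 2)}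
    {w : Fin n → ZMod 2} (h : ¬ ∀ c ∈ C, chiPair c w = 1) :
    ∑ c ∈ codeFinset C, chiPair c w = 0 := by
  push_neg at h
  obtain ⟨c₀, hc₀C, hc₀⟩ := h
  have hc₀' : chiPair c₀ w = -1 := (chiPair_neg_one_or_one c₀ w).resolve_left hc₀
  have key : ∑ c ∈ codeFinset C, chiPair c w
      = ∑ c ∈ codeFinset C, chiPair (c + c₀) w := by
    apply Finset.sum_nbij' (fun c => c + c₀) (fun c => c + c₀)
    · intro c hc; rw [mem_codeFinset] at hc ⊢; exact C.add_mem hc hc₀C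
    · intro c hc; rw [mem_codeFinset] at hc ⊢; exact C.add_mem hc hc₀C
    · intro c _; exact add_add_self c c₀
    · intro c _; exact add_add_self c c₀
    · intro c _; rw [add_add_self]
  have h2 : ∑ c ∈ codeFinset C, chiPair c w = -∑ c ∈ codeFinset C, chiPair c w := by
    nth_rewrite 1 [key]
    rw [← Finset.sum_neg_distrib]
    exact Finset.sum_congr rfl fun c _ => by rw [chiPair_add_left, hc₀', mul_neg_one]
  linarith

lemma sum_chiPair_nonneg {n : ℕ} (C : Submodule (ZMod 2) (Fin n → ZMod 2))
    (w : Fin n → ZMod 2) : 0 ≤ ∑ c ∈ codeFinset C, chiPair c w := by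
  by_cases h : ∀ c ∈ C, chiPair c w = 1
  · rw [sum_chiPair_of_forall h]; positivity
  · rw [sum_chiPair_of_not_forall h]
lemma zmod2_ne_zero {a : ZMod 2} (h : a ≠ 0) : a = 1 := by revert h; revert a; decide

lemma codeFinset_top {n : ℕ} :
    codeFinset (⊤ : Submodule (ZMod 2) (Fin n → ZMod 2)) = univ := by
  ext w; simp [mem_codeFinset]

lemma sum_chiPair_univ {n : ℕ} (v : Fin n → ZMod 2) :
    ∑ w : Fin n → ZMod 2, chiPair v w = if v = 0 then (2 : ℤ) ^ n else 0 := by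
  simp_rw [chiPair_comm v]
  rw [← codeFinset_top]
  split
  · next hv =>
    subst hv
    rw [sum_chiPair_of_forall (fun c _ => chiPair_zero_right c),
      Nat.card_congr (Submodule.topEquiv (R := ZMod 2)
        (M := Fin n → ZMod 2)).toEquiv,
      Nat.card_eq_fintype_card, Fintype.card_fun, ZMod.card, Fintype.card_fin]
    push_cast
    ring
  · next hv =>
    apply sum_chiPair_of_not_forall
    intro h
    apply hv
    funext i
    by_contra hvi
    have hvi1 : v i = 1 := zmod2_ne_zero hvi
    have := h (Pi.single i (1 : ZMod 2) : Fin n → ZMod 2) Submodule.mem_top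
    rw [chiPair_eq] at this
    have hs : (∑ j, (Pi.single i (1 : ZMod 2) : Fin n → ZMod 2) j * v j) = v i := by
      simp [Pi.single_apply, ite_mul]
    rw [hs, hvi1] at this
    simp [eps] at this
lemma sum_eps {n : ℕ} (v : Fin n → ZMod 2) :
    ∑ i, eps (v i) = (n : ℤ) - 2 * (hammingNorm v : ℤ) := by
  have h : ∀ i, eps (v i) = 1 - 2 * (if v i ≠ 0 then (1 : ℤ) else 0) := by
    intro i; unfold eps; by_cases hv : v i = 0 <;> simp [hv]
  rw [Finset.sum_congr rfl fun i _ => h i, Finset.sum_sub_distrib, ← Finset.mul_sum,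
    Finset.sum_boole, Finset.sum_const]
  simp [hammingNorm]

lemma sum_prod_eps {ℓ : ℕ} (r : Fin ℓ → ZMod 2) :
    ∑ J : Finset (Fin ℓ), ∏ j ∈ J, eps (r j) = if r = 0 then (2 : ℤ) ^ ℓ else 0 := by
  have key : ∑ J : Finset (Fin ℓ), ∏ j ∈ J, eps (r j) = ∏ j, (eps (r j) + 1) := by
    rw [Finset.prod_add, Finset.powerset_univ]
    exact (Finset.sum_congr rfl fun t _ => by simp).symm
  rw [key]
  by_cases hr : r = 0
  · subst hr
    rw [if_pos rfl]
    norm_num [eps, Finset.prod_const]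
  · obtain ⟨j, hj⟩ : ∃ j, r j ≠ 0 := by
      by_contra h; push_neg at h; exact hr (funext h)
    rw [if_neg hr]
    apply Finset.prod_eq_zero (Finset.mem_univ j)
    unfold eps; rw [if_neg hj]; ring

/-- Number of coordinates with column pattern `q`. -/
def patCount {n ℓ : ℕ} (x : Fin ℓ → (Fin n → ZMod 2)) (q : Fin ℓ → ZMod 2) : ℕ :=
  (univ.filter (fun i : Fin n => (fun j => x j i) = q)).card

lemma key_count {n ℓ : ℕ} (x : Fin ℓ → (Fin n → ZMod 2)) (q : Fin ℓ → ZMod 2) :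
    (2 : ℤ) ^ ℓ * (patCount x q : ℤ)
      = ∑ J : Finset (Fin ℓ), (∏ j ∈ J, eps (q j)) * ((n : ℤ) - 2 * (sdConfig n ℓ x J : ℤ)) := by
  have step1 : ∀ J : Finset (Fin ℓ),
      (∏ j ∈ J, eps (q j)) * ((n : ℤ) - 2 * (sdConfig n ℓ x J : ℤ))
        = ∑ i, ∏ j ∈ J, eps (q j + x j i) := by
    intro J
    rw [sdConfig, ← sum_eps (∑ j ∈ J, x j), Finset.mul_sum]
    refine Finset.sum_congr rfl fun i _ => ?_
    rw [Finset.sum_apply i J x, eps_sum, ← Finset.prod_mul_distrib]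
    exact Finset.prod_congr rfl fun j _ => (eps_add _ _).symm
  rw [Finset.sum_congr rfl fun J _ => step1 J, Finset.sum_comm]
  have step2 : ∀ i, ∑ J : Finset (Fin ℓ), ∏ j ∈ J, eps (q j + x j i)
      = if (fun j => x j i) = q then (2 : ℤ) ^ ℓ else 0 := by
    intro i
    rw [sum_prod_eps (fun j => q j + x j i)]
    have hZ : ∀ a b : ZMod 2, a + b = 0 ↔ b = a := by decide
    have : ((fun j => q j + x j i) = 0) ↔ ((fun j => x j i) = q) := by
      simp only [funext_iff, Pi.zero_apply]
      exact forall_congr' fun j => hZ (q j) (x j i)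
    simp only [this]
  rw [Finset.sum_congr rfl fun i _ => step2 i, Finset.sum_ite, Finset.sum_const_zero,
    add_zero, Finset.sum_const, patCount]
  ring
lemma patCount_eq {n ℓ : ℕ} {x x' : Fin ℓ → (Fin n → ZMod 2)}
    (hcfg : sdConfig n ℓ x = sdConfig n ℓ x') (q : Fin ℓ → ZMod 2) :
    patCount x q = patCount x' q := by
  have h1 := key_count x q
  have h2 := key_count x' q
  rw [hcfg] at h1
  have := mul_left_cancel₀ (by positivity : (2 : ℤ) ^ ℓ ≠ 0) (h1.trans h2.symm)
  exact_mod_cast this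

lemma exists_perm {n ℓ : ℕ} (x x' : Fin ℓ → (Fin n → ZMod 2))
    (hcfg : sdConfig n ℓ x = sdConfig n ℓ x') :
    ∃ σ : Equiv.Perm (Fin n), ∀ j i, x' j i = x j (σ i) := by
  classical
  let f : Fin n → (Fin ℓ → ZMod 2) := fun i j => x j i
  let f' : Fin n → (Fin ℓ → ZMod 2) := fun i j => x' j i
  have e : ∀ q, { i // f' i = q } ≃ { i // f i = q } := fun q =>
    Fintype.equivOfCardEq (by
      rw [Fintype.card_subtype, Fintype.card_subtype]
      exact (patCount_eq hcfg q).symm)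
  refine ⟨Equiv.ofFiberEquiv e, fun j i => ?_⟩
  have := Equiv.ofFiberEquiv_map e i
  exact (congrFun this j).symm

lemma hammingNorm_comp_equiv {n : ℕ} (v : Fin n → ZMod 2) (σ : Equiv.Perm (Fin n)) :
    hammingNorm (fun i => v (σ i)) = hammingNorm v := by
  unfold hammingNorm
  apply Finset.card_bij' (fun i _ => σ i) (fun i _ => σ.symm i)
  · intro i hi; simpa using hi
  · intro i hi; simpa using hi
  · intro i _; simp
  · intro i _; simp

lemma sdConfig_comp_equiv {n ℓ : ℕ} (y : Fin ℓ → (Fin n → ZMod 2)) (σ : Equiv.Perm (Fin n)) :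
    sdConfig n ℓ (fun j i => y j (σ i)) = sdConfig n ℓ y := by
  funext J
  show hammingNorm (∑ j ∈ J, fun i => y j (σ i)) = hammingNorm (∑ j ∈ J, y j)
  have h2 : (∑ j ∈ J, fun i : Fin n => y j (σ i)) = fun i => (∑ j ∈ J, y j) (σ i) := by
    funext i
    rw [Finset.sum_apply i J (fun j => fun i => y j (σ i)), Finset.sum_apply]
  rw [h2, hammingNorm_comp_equiv]

lemma sum_tupleChi_invariant {n ℓ : ℕ} (h : Finset (Fin ℓ) → ℕ)
    {x x' : Fin ℓ → (Fin n → ZMod 2)} (hcfg : sdConfig n ℓ x = sdConfig n ℓ x') :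
    ∑ y ∈ univ.filter (fun y : Fin ℓ → (Fin n → ZMod 2) => sdConfig n ℓ y = h), tupleChi x y
      = ∑ y ∈ univ.filter (fun y : Fin ℓ → (Fin n → ZMod 2) => sdConfig n ℓ y = h),
          tupleChi x' y := by
  obtain ⟨σ, hσ⟩ := exists_perm x x' hcfg
  apply Finset.sum_nbij' (fun y => fun j i => y j (σ i)) (fun y => fun j i => y j (σ.symm i))
  · intro y hy
    simp only [Finset.mem_filter, Finset.mem_univ, true_and] at hy ⊢
    rw [sdConfig_comp_equiv, hy]
  · intro y hy
    simp only [Finset.mem_filter, Finset.mem_univ, true_and] at hy ⊢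
    rw [sdConfig_comp_equiv y σ.symm, hy]
  · intro y _; funext j i; simp
  · intro y _; funext j i; simp
  · intro y _
    unfold tupleChi
    refine Finset.prod_congr rfl fun j _ => ?_
    rw [chiPair_eq, chiPair_eq]
    congr 1
    calc ∑ i, x j i * y j i = ∑ i, x j (σ i) * y j (σ i) := (Equiv.sum_comp σ _).symm
      _ = ∑ i, x' j i * y j (σ i) := by
          refine Finset.sum_congr rfl fun i _ => ?_
          rw [hσ j i]
lemma kraw_eq_of_config {n ℓ : ℕ} (h g : Finset (Fin ℓ) → ℕ)
    (z : Fin ℓ → (Fin n → ZMod 2)) (hz : sdConfig n ℓ z = g) :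
    kraw n ℓ h g = ∑ y ∈ univ.filter
        (fun y : Fin ℓ → (Fin n → ZMod 2) => sdConfig n ℓ y = h), tupleChi z y := by
  have hex : ∃ x : Fin ℓ → (Fin n → ZMod 2), sdConfig n ℓ x = g := ⟨z, hz⟩
  rw [kraw, dif_pos hex]
  exact sum_tupleChi_invariant h (hex.choose_spec.trans hz.symm)

lemma sdConfig_zero {n ℓ : ℕ} :
    sdConfig n ℓ (fun _ _ => (0 : ZMod 2)) = fun _ => 0 := by
  funext J
  show hammingNorm (∑ _j ∈ J, (fun _ => (0 : ZMod 2))) = 0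
  rw [Finset.sum_const]
  rw [show (#J • fun _ : Fin n => (0 : ZMod 2)) = (0 : Fin n → ZMod 2) from smul_zero _]
  exact hammingNorm_zero

lemma zeroCfg_mem_image {n ℓ : ℕ} :
    (fun _ => 0 : Finset (Fin ℓ) → ℕ) ∈ Finset.image (sdConfig n ℓ) univ :=
  Finset.mem_image.2 ⟨fun _ _ => 0, Finset.mem_univ _, sdConfig_zero⟩

lemma eq_zero_of_sdConfig_zero {n ℓ : ℕ} {y : Fin ℓ → (Fin n → ZMod 2)}
    (hy : sdConfig n ℓ y = fun _ => 0) : y = fun _ _ => 0 := by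
  funext j
  have h1 : sdConfig n ℓ y {j} = 0 := congrFun hy {j}
  rw [sdConfig, Finset.sum_singleton] at h1
  have := hammingNorm_eq_zero.1 h1
  rw [this]; rfl

lemma filter_sdConfig_zero {n ℓ : ℕ} :
    (univ.filter (fun y : Fin ℓ → (Fin n → ZMod 2) => sdConfig n ℓ y = fun _ => 0))
      = {fun _ _ => 0} := by
  ext y
  simp only [Finset.mem_filter, Finset.mem_univ, true_and, Finset.mem_singleton]
  constructor
  · exact eq_zero_of_sdConfig_zero
  · rintro rfl; exact sdConfig_zero

lemma kraw_zeroCfg {n ℓ : ℕ} (g : Finset (Fin ℓ) → ℕ)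
    (hg : g ∈ Finset.image (sdConfig n ℓ) univ) :
    kraw n ℓ (fun _ => 0) g = 1 := by
  obtain ⟨z, _, hz⟩ := Finset.mem_image.1 hg
  rw [kraw_eq_of_config _ _ z hz, filter_sdConfig_zero, Finset.sum_singleton, tupleChi]
  refine Finset.prod_eq_one fun j _ => ?_
  exact chiPair_zero_right (z j)

lemma sum_kraw_over_image {n ℓ : ℕ} (g : Finset (Fin ℓ) → ℕ)
    (hg : g ∈ Finset.image (sdConfig n ℓ) univ) :
    ∑ h ∈ Finset.image (sdConfig n ℓ) univ, kraw n ℓ h g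
      = if g = (fun _ => 0) then (2 : ℤ) ^ (n * ℓ) else 0 := by
  obtain ⟨z, _, hz⟩ := Finset.mem_image.1 hg
  have step1 : ∑ h ∈ Finset.image (sdConfig n ℓ) univ, kraw n ℓ h g
      = ∑ y : Fin ℓ → (Fin n → ZMod 2), tupleChi z y := by
    rw [Finset.sum_congr rfl fun h _ => kraw_eq_of_config h g z hz]
    exact Finset.sum_fiberwise_of_maps_to
      (fun y _ => Finset.mem_image.2 ⟨y, Finset.mem_univ _, rfl⟩) _
  have step2 : ∑ y : Fin ℓ → (Fin n → ZMod 2), tupleChi z y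
      = ∏ j, ∑ w : Fin n → ZMod 2, chiPair (z j) w := by
    rw [Finset.prod_univ_sum]
    rw [Fintype.piFinset_univ]
    rfl
  rw [step1, step2, Finset.prod_congr rfl fun j _ => sum_chiPair_univ (z j)]
  by_cases hzz : ∀ j, z j = 0
  · have hg0 : g = fun _ => 0 := by
      rw [← hz, show z = fun _ _ => 0 from funext fun j => hzz j, sdConfig_zero]
    rw [if_pos hg0, Finset.prod_congr rfl fun j _ => if_pos (hzz j), Finset.prod_const]
    rw [Finset.card_univ, Fintype.card_fin, pow_mul]
  · push_neg at hzz
    obtain ⟨j, hj⟩ := hzz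
    have hg0 : g ≠ fun _ => 0 := by
      intro hc
      rw [hc] at hz
      exact hj (congrFun (eq_zero_of_sdConfig_zero hz) j)
    rw [if_neg hg0]
    exact Finset.prod_eq_zero (Finset.mem_univ j) (if_neg hj)
lemma profileLin_eq_card {n ℓ : ℕ} (C : Submodule (ZMod 2) (Fin n → ZMod 2))
    (g : Finset (Fin ℓ) → ℕ)
    [DecidablePred fun z : Fin ℓ → (Fin n → ZMod 2) =>
      (∀ j, z j ∈ (C : Set (Fin n → ZMod 2))) ∧ sdConfig n ℓ z = g] :
    profileLin n ℓ (C : Set (Fin n → ZMod 2)) g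
      = (univ.filter (fun z : Fin ℓ → (Fin n → ZMod 2) =>
          (∀ j, z j ∈ (C : Set (Fin n → ZMod 2))) ∧ sdConfig n ℓ z = g)).card := by
  rw [profileLin, Nat.card_eq_fintype_card, Fintype.card_subtype]

lemma profileLin_zeroCfg {n ℓ : ℕ} (C : Submodule (ZMod 2) (Fin n → ZMod 2)) :
    profileLin n ℓ (C : Set (Fin n → ZMod 2)) (fun _ => 0) = 1 := by
  rw [profileLin]
  haveI : Unique {z : Fin ℓ → (Fin n → ZMod 2) //
      (∀ j, z j ∈ (C : Set (Fin n → ZMod 2))) ∧ sdConfig n ℓ z = fun _ => 0} :=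
    { default := ⟨fun _ _ => 0, fun j => C.zero_mem, sdConfig_zero⟩
      uniq := fun z => Subtype.ext (eq_zero_of_sdConfig_zero z.2.2) }
  exact Nat.card_unique

lemma profileLin_dist {n d ℓ : ℕ} (C : Submodule (ZMod 2) (Fin n → ZMod 2))
    (hdist : ∀ x ∈ C, ∀ y ∈ C, x ≠ y → d ≤ hammingDist x y)
    (g : Finset (Fin ℓ) → ℕ) (J : Finset (Fin ℓ)) (h1 : 1 ≤ g J) (h2 : g J ≤ d - 1) :
    profileLin n ℓ (C : Set (Fin n → ZMod 2)) g = 0 := by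
  rw [profileLin]
  have : IsEmpty {z : Fin ℓ → (Fin n → ZMod 2) //
      (∀ j, z j ∈ (C : Set (Fin n → ZMod 2))) ∧ sdConfig n ℓ z = g} := by
    constructor
    rintro ⟨z, hzC, hzg⟩
    have hwC : (∑ j ∈ J, z j) ∈ C := Submodule.sum_mem C fun j _ => hzC j
    have hnorm : hammingNorm (∑ j ∈ J, z j) = g J := by rw [← hzg]; rfl
    have hne : (∑ j ∈ J, z j) ≠ 0 := by
      intro hc
      rw [hc, hammingNorm_zero] at hnorm
      omega
    have := hdist _ hwC 0 C.zero_mem hne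
    rw [hammingDist_zero_right, hnorm] at this
    omega
  exact Nat.card_of_isEmpty

lemma sum_tupleChi_code {n ℓ : ℕ} (C : Submodule (ZMod 2) (Fin n → ZMod 2))
    (y : Fin ℓ → (Fin n → ZMod 2)) :
    ∑ z ∈ Fintype.piFinset (fun _ : Fin ℓ => codeFinset C), tupleChi z y
      = ∏ j, ∑ c ∈ codeFinset C, chiPair c (y j) := by
  rw [Finset.prod_univ_sum]
  rfl

lemma macwilliams_int {n ℓ : ℕ} (C : Submodule (ZMod 2) (Fin n → ZMod 2))
    (h : Finset (Fin ℓ) → ℕ)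
    [DecidablePred fun z : Fin ℓ → (Fin n → ZMod 2) =>
      ∀ j, z j ∈ (C : Set (Fin n → ZMod 2))] :
    ∑ g ∈ Finset.image (sdConfig n ℓ) univ, kraw n ℓ h g
        * ((univ.filter (fun z : Fin ℓ → (Fin n → ZMod 2) =>
            (∀ j, z j ∈ (C : Set (Fin n → ZMod 2))) ∧ sdConfig n ℓ z = g)).card : ℤ)
      = ∑ y ∈ univ.filter (fun y : Fin ℓ → (Fin n → ZMod 2) => sdConfig n ℓ y = h),
          ∏ j, ∑ c ∈ codeFinset C, chiPair c (y j) := by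
  classical
  set S : Finset (Fin ℓ → (Fin n → ZMod 2)) :=
    univ.filter (fun z => ∀ j, z j ∈ (C : Set (Fin n → ZMod 2))) with hS
  have hfilter : ∀ g, univ.filter (fun z : Fin ℓ → (Fin n → ZMod 2) =>
      (∀ j, z j ∈ (C : Set (Fin n → ZMod 2))) ∧ sdConfig n ℓ z = g)
        = S.filter (fun z => sdConfig n ℓ z = g) := by
    intro g; rw [hS, Finset.filter_filter]
  have step1 : ∀ g ∈ Finset.image (sdConfig n ℓ) univ,
      kraw n ℓ h g * ((univ.filter (fun z : Fin ℓ → (Fin n → ZMod 2) =>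
          (∀ j, z j ∈ (C : Set (Fin n → ZMod 2))) ∧ sdConfig n ℓ z = g)).card : ℤ)
        = ∑ z ∈ S.filter (fun z => sdConfig n ℓ z = g),
            ∑ y ∈ univ.filter (fun y : Fin ℓ → (Fin n → ZMod 2) => sdConfig n ℓ y = h),
              tupleChi z y := by
    intro g _
    rw [hfilter]
    have hc : ∀ z ∈ S.filter (fun z => sdConfig n ℓ z = g),
        (∑ y ∈ univ.filter (fun y : Fin ℓ → (Fin n → ZMod 2) => sdConfig n ℓ y = h),
          tupleChi z y) = kraw n ℓ h g := fun z hz =>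
      (kraw_eq_of_config h g z (Finset.mem_filter.1 hz).2).symm
    rw [Finset.sum_congr rfl hc, Finset.sum_const, nsmul_eq_mul, mul_comm]
  rw [Finset.sum_congr rfl step1,
    Finset.sum_fiberwise_of_maps_to
      (fun z _ => Finset.mem_image.2 ⟨z, Finset.mem_univ _, rfl⟩), Finset.sum_comm]
  have hSpi : S = Fintype.piFinset (fun _ : Fin ℓ => codeFinset C) := by
    ext z
    simp only [hS, Finset.mem_filter, Finset.mem_univ, true_and, Fintype.mem_piFinset,
      mem_codeFinset]
    rfl
  exact Finset.sum_congr rfl fun y _ => by rw [hSpi, sum_tupleChi_code]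
lemma objective_count {n ℓ : ℕ} (C : Submodule (ZMod 2) (Fin n → ZMod 2))
    [DecidablePred fun z : Fin ℓ → (Fin n → ZMod 2) =>
      ∀ j, z j ∈ (C : Set (Fin n → ZMod 2))] :
    ∑ g ∈ Finset.image (sdConfig n ℓ) univ,
        ((univ.filter (fun z : Fin ℓ → (Fin n → ZMod 2) =>
          (∀ j, z j ∈ (C : Set (Fin n → ZMod 2))) ∧ sdConfig n ℓ z = g)).card)
      = (Nat.card C) ^ ℓ := by
  classical
  set S : Finset (Fin ℓ → (Fin n → ZMod 2)) :=
    univ.filter (fun z => ∀ j, z j ∈ (C : Set (Fin n → ZMod 2))) with hS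
  have hfilter : ∀ g, univ.filter (fun z : Fin ℓ → (Fin n → ZMod 2) =>
      (∀ j, z j ∈ (C : Set (Fin n → ZMod 2))) ∧ sdConfig n ℓ z = g)
        = S.filter (fun z => sdConfig n ℓ z = g) := by
    intro g; rw [hS, Finset.filter_filter]
  rw [Finset.sum_congr rfl fun g _ => by rw [hfilter g]]
  rw [← Finset.card_eq_sum_card_fiberwise
    (fun z _ => Finset.mem_image.2 ⟨z, Finset.mem_univ _, rfl⟩)]
  have hSpi : S = Fintype.piFinset (fun _ : Fin ℓ => codeFinset C) := by
    ext z
    simp only [hS, Finset.mem_filter, Finset.mem_univ, true_and, Fintype.mem_piFinset,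
      mem_codeFinset]
    rfl
  rw [hSpi, Fintype.card_piFinset]
  simp [card_codeFinset]

lemma feas_obj (n d ℓ : ℕ) (C : Submodule (ZMod 2) (Fin n → ZMod 2))
    (hdist : ∀ x ∈ C, ∀ y ∈ C, x ≠ y → d ≤ hammingDist x y) :
    KrawtchoukLPLinFeasible n d ℓ
        (fun g => (profileLin n ℓ (C : Set (Fin n → ZMod 2)) g : ℝ)) ∧
      ∑ g ∈ Finset.image (sdConfig n ℓ) univ,
          (profileLin n ℓ (C : Set (Fin n → ZMod 2)) g : ℝ) = (Nat.card C : ℝ) ^ ℓ := by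
  classical
  constructor
  · refine ⟨?_, ?_, ?_, ?_⟩
    · simp only [profileLin_zeroCfg C]; norm_num
    · rintro g hg ⟨J, h1, h2⟩
      simp only [profileLin_dist C hdist g J h1 h2]
      norm_num
    · intro h hh
      have hnn : (0 : ℤ) ≤ ∑ y ∈ univ.filter
          (fun y : Fin ℓ → (Fin n → ZMod 2) => sdConfig n ℓ y = h),
            ∏ j, ∑ c ∈ codeFinset C, chiPair c (y j) :=
        Finset.sum_nonneg fun y _ => Finset.prod_nonneg fun j _ => sum_chiPair_nonneg C (y j)
      rw [← macwilliams_int C h] at hnn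
      have hrw : ∀ g ∈ Finset.image (sdConfig n ℓ) univ,
          (kraw n ℓ h g : ℝ) * (profileLin n ℓ (C : Set (Fin n → ZMod 2)) g : ℝ)
            = (kraw n ℓ h g : ℝ) * ((univ.filter (fun z : Fin ℓ → (Fin n → ZMod 2) =>
              (∀ j, z j ∈ (C : Set (Fin n → ZMod 2))) ∧ sdConfig n ℓ z = g)).card : ℝ) := by
        intro g _
        rw [profileLin_eq_card C g]
      rw [Finset.sum_congr rfl hrw]
      exact_mod_cast hnn
    · intro g; positivity
  · have hrw : ∀ g ∈ Finset.image (sdConfig n ℓ) univ,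
        (profileLin n ℓ (C : Set (Fin n → ZMod 2)) g : ℝ)
          = ((univ.filter (fun z : Fin ℓ → (Fin n → ZMod 2) =>
            (∀ j, z j ∈ (C : Set (Fin n → ZMod 2))) ∧ sdConfig n ℓ z = g)).card : ℝ) := by
      intro g _
      rw [profileLin_eq_card C g]
    rw [Finset.sum_congr rfl hrw]
    exact_mod_cast congrArg (Nat.cast : ℕ → ℝ) (objective_count C)

lemma val_bddAbove (n d ℓ : ℕ) :
    BddAbove {v : ℝ | ∃ a : (Finset (Fin ℓ) → ℕ) → ℝ, KrawtchoukLPLinFeasible n d ℓ a ∧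
      v = ∑ g ∈ Finset.image (sdConfig n ℓ) univ, a g} := by
  refine ⟨(2 : ℝ) ^ (n * ℓ), ?_⟩
  rintro v ⟨a, ⟨ha0, _, hmac, hnn⟩, rfl⟩
  have h1 : ∑ g ∈ Finset.image (sdConfig n ℓ) univ, a g
      = ∑ g ∈ Finset.image (sdConfig n ℓ) univ, (kraw n ℓ (fun _ => 0) g : ℝ) * a g := by
    refine Finset.sum_congr rfl fun g hg => ?_
    rw [kraw_zeroCfg g hg]
    norm_num
  have h2 : ∑ g ∈ Finset.image (sdConfig n ℓ) univ, (kraw n ℓ (fun _ => 0) g : ℝ) * a g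
      ≤ ∑ h ∈ Finset.image (sdConfig n ℓ) univ,
          ∑ g ∈ Finset.image (sdConfig n ℓ) univ, (kraw n ℓ h g : ℝ) * a g :=
    Finset.single_le_sum (fun h hh => hmac h hh) zeroCfg_mem_image
  have h3 : ∑ h ∈ Finset.image (sdConfig n ℓ) univ,
      ∑ g ∈ Finset.image (sdConfig n ℓ) univ, (kraw n ℓ h g : ℝ) * a g
        = ∑ g ∈ Finset.image (sdConfig n ℓ) univ,
            (∑ h ∈ Finset.image (sdConfig n ℓ) univ, (kraw n ℓ h g : ℝ)) * a g := by
    rw [Finset.sum_comm]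
    exact Finset.sum_congr rfl fun g _ => (Finset.sum_mul _ _ _).symm
  have h4 : ∀ g ∈ Finset.image (sdConfig n ℓ) univ,
      (∑ h ∈ Finset.image (sdConfig n ℓ) univ, (kraw n ℓ h g : ℝ)) * a g
        = (if g = (fun _ => 0) then (2 : ℝ) ^ (n * ℓ) else 0) * a g := by
    intro g hg
    congr 1
    have := sum_kraw_over_image g hg
    have hc : ((∑ h ∈ Finset.image (sdConfig n ℓ) univ, kraw n ℓ h g : ℤ) : ℝ)
        = ∑ h ∈ Finset.image (sdConfig n ℓ) univ, (kraw n ℓ h g : ℝ) := by push_cast; rfl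
    rw [← hc, this]
    split <;> norm_num
  have h5 : ∑ g ∈ Finset.image (sdConfig n ℓ) univ,
      (if g = (fun _ => 0) then (2 : ℝ) ^ (n * ℓ) else 0) * a g
        = (2 : ℝ) ^ (n * ℓ) * a (fun _ => 0) := by
    rw [Finset.sum_eq_single (fun _ => 0 : Finset (Fin ℓ) → ℕ)]
    · rw [if_pos rfl]
    · intro g _ hgne
      rw [if_neg hgne, zero_mul]
    · intro habs
      exact absurd zeroCfg_mem_image habs
  calc ∑ g ∈ Finset.image (sdConfig n ℓ) univ, a g
      ≤ ∑ g ∈ Finset.image (sdConfig n ℓ) univ,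
          (∑ h ∈ Finset.image (sdConfig n ℓ) univ, (kraw n ℓ h g : ℝ)) * a g := by
        rw [h1, ← h3]; exact h2
    _ = (2 : ℝ) ^ (n * ℓ) * a (fun _ => 0) := by
        rw [Finset.sum_congr rfl h4, h5]
    _ = (2 : ℝ) ^ (n * ℓ) := by rw [ha0, mul_one]
/-- Soundness of `KrawtchoukLP_Lin`: if `C ⊆ 𝔽₂ⁿ` is a linear code of minimum distance at
least `d`, then its `ℓ`-configuration profile is a feasible solution with objective value
`|C|^ℓ`; consequently `val(KrawtchoukLP_Lin(n,d,ℓ))^{1/ℓ} ≥ A₂^Lin(n,d)`. -/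
theorem krawtchoukLPLin_sound (n d ℓ : ℕ) (hℓ : 0 < ℓ)
    (C : Submodule (ZMod 2) (Fin n → ZMod 2))
    (hdist : ∀ x ∈ C, ∀ y ∈ C, x ≠ y → d ≤ hammingDist x y) :
    (KrawtchoukLPLinFeasible n d ℓ
        (fun g => (profileLin n ℓ (C : Set (Fin n → ZMod 2)) g : ℝ)) ∧
      ∑ g ∈ Finset.image (sdConfig n ℓ) univ,
          (profileLin n ℓ (C : Set (Fin n → ZMod 2)) g : ℝ) = (Nat.card C : ℝ) ^ ℓ) ∧
    (ALin n d : ℝ) ≤ (krawtchoukLPLinVal n d ℓ) ^ ((1 : ℝ) / (ℓ : ℝ)) := by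
  refine ⟨feas_obj n d ℓ C hdist, ?_⟩
  -- The ALin set is nonempty and bounded, so its sSup is attained.
  have hne : {m : ℕ | ∃ C' : Submodule (ZMod 2) (Fin n → ZMod 2),
      (∀ x ∈ C', ∀ y ∈ C', x ≠ y → d ≤ hammingDist x y) ∧ Nat.card C' = m}.Nonempty :=
    ⟨Nat.card C, C, hdist, rfl⟩
  have hbddN : BddAbove {m : ℕ | ∃ C' : Submodule (ZMod 2) (Fin n → ZMod 2),
      (∀ x ∈ C', ∀ y ∈ C', x ≠ y → d ≤ hammingDist x y) ∧ Nat.card C' = m} := by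
    refine ⟨Nat.card (Fin n → ZMod 2), ?_⟩
    rintro m ⟨C', _, rfl⟩
    exact Nat.card_le_card_of_injective _ Subtype.val_injective
  have hmem := Nat.sSup_mem hne hbddN
  obtain ⟨C₀, hd₀, hcard₀⟩ := hmem
  have hval : ((Nat.card C₀ : ℝ)) ^ ℓ ≤ krawtchoukLPLinVal n d ℓ := by
    apply le_csSup (val_bddAbove n d ℓ)
    exact ⟨fun g => (profileLin n ℓ (C₀ : Set (Fin n → ZMod 2)) g : ℝ),
      (feas_obj n d ℓ C₀ hd₀).1, ((feas_obj n d ℓ C₀ hd₀).2).symm⟩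
  rw [show ALin n d = Nat.card C₀ from hcard₀.symm]
  set M : ℝ := (Nat.card C₀ : ℝ) with hM
  have hM0 : 0 ≤ M := Nat.cast_nonneg _
  have hℓR : (ℓ : ℝ) ≠ 0 := Nat.cast_ne_zero.2 hℓ.ne'
  have hMeq : M = (M ^ ℓ) ^ ((1 : ℝ) / (ℓ : ℝ)) := by
    rw [← Real.rpow_natCast M ℓ, ← Real.rpow_mul hM0, mul_one_div, div_self hℓR,
      Real.rpow_one]
  rw [hMeq]
  exact Real.rpow_le_rpow (by positivity) hval (by positivity)
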